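/- Let W ~ N(0, σ_W²) and let p ∈ [0,1], k a nonnegative integer. If β is chosen so that P(|W| ≤ β) = 1 − (1−p)^k, then E[W²·1_{|W| > β}] = σ_W²·((1−p)^k + (2/√π)·erfi(1 − (1−p)^k)·e^{−(erfi(1 − (1−p)^k))²}). -/

import Mathlib

open MeasureTheory ProbabilityTheory

/-- The error function erf(x) = (2/√π)·∫₀ˣ e^{−t²} dt. -/
noncomputable def erf (x : ℝ) : ℝ :=
  (2 / Real.sqrt Real.pi) * ∫ t in (0 : ℝ)..x, Real.exp (-t ^ 2)

/-!
With `φ` the density of `N(0, v)`, one has `(v x φ(x))' = v φ(x) - x² φ(x)`, so on `[-β, β]`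
the second moment is `v P(|W| ≤ β) - 2 v β φ(β)`. Subtracting from `E[W²] = v` gives the tail
moment `v (P(|W| > β) + 2 β φ(β))`, and the substitution `x = √(2v) t` identifies
`P(|W| ≤ β)` with `erf (β / √(2v))`, so that `erfi (1 - (1 - p)^k) = β / √(2v)`.
-/

open Real
open scoped NNReal

lemma intervalIntegral_exp_neg_sq (a b : ℝ) :
    ∫ t in a..b, exp (-t ^ 2) = √π / 2 * (erf b - erf a) := by
  have hint (u w : ℝ) : IntervalIntegrable (fun t => exp (-t ^ 2)) volume u w := by
    apply Continuous.intervalIntegrable; fun_prop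
  rw [erf, erf, ← mul_sub, intervalIntegral.integral_interval_sub_left (hint 0 b) (hint 0 a)]
  have : √π ≠ 0 := by positivity
  field_simp

lemma erf_neg (x : ℝ) : erf (-x) = -erf x := by
  have h := intervalIntegral.integral_comp_neg (a := 0) (b := x) (fun t => exp (-t ^ 2))
  simp only [neg_sq, neg_zero] at h
  rw [erf, erf, intervalIntegral.integral_symm, ← h, mul_neg]

lemma erf_strictMono : StrictMono erf := by
  intro a b hab
  have hpos : 0 < ∫ t in a..b, exp (-t ^ 2) :=
    intervalIntegral.intervalIntegral_pos_of_pos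
      (by apply Continuous.intervalIntegrable; fun_prop) (fun _ => exp_pos _) hab
  rw [intervalIntegral_exp_neg_sq] at hpos
  have : 0 < √π := by positivity
  nlinarith

lemma hasDerivAt_gaussianPDFReal (μ : ℝ) {v : ℝ≥0} (hv : v ≠ 0) (x : ℝ) :
    HasDerivAt (gaussianPDFReal μ v) (-((x - μ) / v) * gaussianPDFReal μ v x) x := by
  have hv' : (v : ℝ) ≠ 0 := by exact_mod_cast hv
  have hexponent : HasDerivAt (fun x => -(x - μ) ^ 2 / (2 * v)) (-((x - μ) / v)) x := by
    refine ((((hasDerivAt_id' x).sub_const μ).fun_pow 2).fun_neg.div_const _).congr_deriv ?_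
    field_simp
    ring
  refine (hexponent.exp.const_mul (√(2 * π * v))⁻¹).congr_deriv ?_
  rw [gaussianPDFReal_def]
  ring

@[fun_prop]
lemma continuous_gaussianPDFReal (μ : ℝ) (v : ℝ≥0) : Continuous (gaussianPDFReal μ v) := by
  rw [gaussianPDFReal_def]; fun_prop

lemma intervalIntegral_sq_mul_gaussianPDFReal (μ : ℝ) {v : ℝ≥0} (hv : v ≠ 0) (a b : ℝ) :
    ∫ x in a..b, (x - μ) ^ 2 * gaussianPDFReal μ v x =
      v * (∫ x in a..b, gaussianPDFReal μ v x)
        - v * ((b - μ) * gaussianPDFReal μ v b - (a - μ) * gaussianPDFReal μ v a) := by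
  have hv' : (v : ℝ) ≠ 0 := by exact_mod_cast hv
  have hderiv (x : ℝ) : HasDerivAt (fun x => -(v * ((x - μ) * gaussianPDFReal μ v x)))
      ((x - μ) ^ 2 * gaussianPDFReal μ v x - v * gaussianPDFReal μ v x) x := by
    refine (((hasDerivAt_id' x).sub_const μ).mul (hasDerivAt_gaussianPDFReal μ hv x)
      |>.const_mul (v : ℝ)).neg.congr_deriv ?_
    field_simp
    ring
  have hFTC := intervalIntegral.integral_eq_sub_of_hasDerivAt (a := a) (b := b)
    (fun x _ => hderiv x) (by apply Continuous.intervalIntegrable; fun_prop)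
  rw [intervalIntegral.integral_sub (by apply Continuous.intervalIntegrable; fun_prop)
    (by apply Continuous.intervalIntegrable; fun_prop), intervalIntegral.integral_const_mul] at hFTC
  linarith

lemma setIntegral_gaussianReal_eq_setIntegral_smul {E : Type*} [NormedAddCommGroup E]
    [NormedSpace ℝ E] (μ : ℝ) {v : ℝ≥0} (hv : v ≠ 0) (s : Set ℝ) (f : ℝ → E) :
    ∫ x in s, f x ∂gaussianReal μ v = ∫ x in s, gaussianPDFReal μ v x • f x := by
  rw [gaussianReal_of_var_ne_zero μ hv, restrict_withDensity' s,
    integral_withDensity_eq_integral_toReal_smul (measurable_gaussianPDF μ v)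
      (ae_of_all _ fun _ ↦ gaussianPDF_lt_top)]
  simp [toReal_gaussianPDF]

lemma gaussianPDFReal_zero_neg (v : ℝ≥0) (x : ℝ) :
    gaussianPDFReal 0 v (-x) = gaussianPDFReal 0 v x := by
  simp [gaussianPDFReal_def]

lemma setIntegral_abs_le_eq_intervalIntegral (f : ℝ → ℝ) {b : ℝ} (hb : 0 ≤ b) :
    ∫ x in {x | |x| ≤ b}, f x = ∫ x in -b..b, f x := by
  simp_rw [abs_le]
  rw [intervalIntegral.integral_of_le (by linarith), ← integral_Icc_eq_integral_Ioc]
  rfl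

lemma intervalIntegral_gaussianPDFReal_zero_symm {v : ℝ≥0} (hv : v ≠ 0) (b : ℝ) :
    ∫ x in -b..b, gaussianPDFReal 0 v x = erf (b / √(2 * v)) := by
  have hs : 0 < √(2 * v) := by positivity
  have hpdf (x : ℝ) : gaussianPDFReal 0 v x = (√(2 * π * v))⁻¹ * exp (-(x / √(2 * v)) ^ 2) := by
    simp only [gaussianPDFReal_def, sub_zero, div_pow, sq_sqrt (by positivity : (0 : ℝ) ≤ 2 * v),
      neg_div]
  simp_rw [hpdf]
  rw [intervalIntegral.integral_const_mul,
    intervalIntegral.integral_comp_div (fun x => exp (-x ^ 2)) hs.ne', intervalIntegral_exp_neg_sq,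
    neg_div, erf_neg, show 2 * π * v = π * (2 * v) by ring, sqrt_mul pi_pos.le]
  have : 0 < √π := by positivity
  field_simp
  ring

lemma gaussianReal_abs_le_toReal {v : ℝ≥0} (hv : v ≠ 0) {b : ℝ} (hb : 0 ≤ b) :
    (gaussianReal 0 v {x | |x| ≤ b}).toReal = erf (b / √(2 * v)) := by
  rw [gaussianReal_apply_eq_integral 0 hv, ENNReal.toReal_ofReal
    (integral_nonneg (gaussianPDFReal_nonneg 0 v)),
    setIntegral_abs_le_eq_intervalIntegral _ hb, intervalIntegral_gaussianPDFReal_zero_symm hv]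

lemma integral_sq_gaussianReal (v : ℝ≥0) : ∫ x, x ^ 2 ∂gaussianReal 0 v = v := by
  simpa [variance_eq_integral measurable_id'.aemeasurable, integral_id_gaussianReal]
    using variance_fun_id_gaussianReal (μ := 0) (v := v)

lemma setIntegral_sq_abs_le_gaussianReal {v : ℝ≥0} (hv : v ≠ 0) {b : ℝ} (hb : 0 ≤ b) :
    ∫ x in {x | |x| ≤ b}, x ^ 2 ∂gaussianReal 0 v
      = v * erf (b / √(2 * v)) - 2 * v * b * gaussianPDFReal 0 v b := by
  have h := intervalIntegral_sq_mul_gaussianPDFReal 0 hv (-b) b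
  simp only [sub_zero, gaussianPDFReal_zero_neg,
    intervalIntegral_gaussianPDFReal_zero_symm hv] at h
  rw [setIntegral_gaussianReal_eq_setIntegral_smul 0 hv,
    setIntegral_abs_le_eq_intervalIntegral _ hb]
  simp only [smul_eq_mul, mul_comm (gaussianPDFReal 0 v _), h]
  ring

lemma setIntegral_sq_abs_gt_gaussianReal {v : ℝ≥0} (hv : v ≠ 0) {b : ℝ} (hb : 0 ≤ b) :
    ∫ x in {x | b < |x|}, x ^ 2 ∂gaussianReal 0 v
      = v * (1 - erf (b / √(2 * v))
          + 2 / √π * (b / √(2 * v)) * exp (-(b / √(2 * v)) ^ 2)) := by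
  have hcompl : {x : ℝ | b < |x|} = {x | |x| ≤ b}ᶜ := by
    ext x; simp
  have hsplit := integral_add_compl (measurableSet_le measurable_abs (measurable_const (a := b)))
    (memLp_id_gaussianReal (μ := 0) (v := v) 2).integrable_sq
  simp only [id] at hsplit
  rw [integral_sq_gaussianReal, setIntegral_sq_abs_le_gaussianReal hv hb, ← hcompl] at hsplit
  rw [eq_sub_of_add_eq' hsplit, gaussianPDFReal, sub_zero]
  have : 0 < √π := by positivity
  rw [div_pow, sq_sqrt (by positivity : (0 : ℝ) ≤ 2 * v), show 2 * π * v = π * (2 * v) by ring,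
    sqrt_mul pi_pos.le]
  field_simp
  ring

theorem stmt_5_general (σW β p : ℝ) (k : ℕ) (hσ : 0 < σW) (hp1 : p < 1)
    (erfi : ℝ → ℝ)
    (h_inv : ∀ y ∈ Set.Ioo (-1 : ℝ) 1, erf (erfi y) = y)
    (hβ : ((gaussianReal 0 (Real.toNNReal (σW ^ 2))) {x | |x| ≤ β}).toReal
            = 1 - (1 - p) ^ k) :
    (∫ x in {x : ℝ | β < |x|}, x ^ 2 ∂(gaussianReal 0 (Real.toNNReal (σW ^ 2)))) =
      σW ^ 2 * ((1 - p) ^ k + (2 / Real.sqrt Real.pi) * erfi (1 - (1 - p) ^ k) *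
        Real.exp (-(erfi (1 - (1 - p) ^ k)) ^ 2)) := by
  have hv : (σW ^ 2).toNNReal ≠ 0 := by simpa using hσ.ne'
  have hvσ : ((σW ^ 2).toNNReal : ℝ) = σW ^ 2 := coe_toNNReal _ (sq_nonneg σW)
  have herfi (t : ℝ) (ht : erf t = 1 - (1 - p) ^ k) : erfi (1 - (1 - p) ^ k) = t := by
    have hy0 : 0 ≤ 1 - (1 - p) ^ k := hβ ▸ ENNReal.toReal_nonneg
    have hy1 : 1 - (1 - p) ^ k < 1 := by linarith [pow_pos (sub_pos.mpr hp1) k]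
    exact erf_strictMono.injective ((h_inv _ ⟨by linarith, hy1⟩).trans ht.symm)
  rcases le_or_gt 0 β with hβ0 | hβ0
  · rw [gaussianReal_abs_le_toReal hv hβ0] at hβ
    rw [setIntegral_sq_abs_gt_gaussianReal hv hβ0, herfi _ hβ, hβ, hvσ]
    ring
  · have hle : {x : ℝ | |x| ≤ β} = ∅ := by
      ext x; simpa using hβ0.trans_le (abs_nonneg x)
    have hgt : {x : ℝ | β < |x|} = Set.univ := by
      ext x; simpa using hβ0.trans_le (abs_nonneg x)
    rw [hle, measure_empty, ENNReal.toReal_zero] at hβ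
    have herfi_zero : erfi (1 - (1 - p) ^ k) = 0 := herfi 0 (by simp [erf, ← hβ])
    rw [hgt, Measure.restrict_univ, integral_sq_gaussianReal, hvσ, herfi_zero,
      ← sub_eq_zero.mp hβ.symm]
    ring

/-- For W ~ N(0, σ_W²), p ∈ [0,1), k ∈ ℕ, and β chosen so that
P(|W| ≤ β) = 1 − (1−p)^k, we have
E[W²·1_{|W| > β}] = σ_W²·((1−p)^k + (2/√π)·erfi(1−(1−p)^k)·e^{−erfi(1−(1−p)^k)²}). -/
theorem stmt_5 (σW β p : ℝ) (k : ℕ) (hσ : 0 < σW) (hp0 : 0 ≤ p) (hp1 : p < 1)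
    (erfi : ℝ → ℝ)
    (h_inv : ∀ y ∈ Set.Ioo (-1 : ℝ) 1, erf (erfi y) = y)
    (hβ : ((gaussianReal 0 (Real.toNNReal (σW ^ 2))) {x | |x| ≤ β}).toReal
            = 1 - (1 - p) ^ k) :
    (∫ x in {x : ℝ | β < |x|}, x ^ 2 ∂(gaussianReal 0 (Real.toNNReal (σW ^ 2)))) =
      σW ^ 2 * ((1 - p) ^ k + (2 / Real.sqrt Real.pi) * erfi (1 - (1 - p) ^ k) *
        Real.exp (-(erfi (1 - (1 - p) ^ k)) ^ 2)) :=
  stmt_5_general σW β p k hσ hp1 erfi h_inv hβ
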